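/- Let f be a measurable predictor, I = {I_1, …, I_B} a fixed finite measurable partition of (0,1], and S = {(Z_m)}_{m=1}^n an i.i.d. sample from D. For every λ ≥ 0, E_S[exp(λ Σ_{i=1}^B |E[l_i(Z)] − (1/n) Σ_{m=1}^n l_i(Z_m)|)] ≤ 2^B · exp(λ²/(2n)); consequently λ · E_S|TCE(f_I) − ECE(f, S)| ≤ B log 2 + λ²/(2n). -/

import Mathlib

open MeasureTheory Set

noncomputable section

namespace Calib

variable {X : Type*} [MeasurableSpace X]

/-- Bin loss `l_I(z) = (y - f(x)) · 1_{f(x) ∈ I}`. -/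
def binLoss (f : X → ℝ) (I : Set ℝ) (z : X × ℝ) : ℝ :=
  (z.2 - f z.1) * I.indicator (fun _ => (1 : ℝ)) (f z.1)

/-- Sum-form TCE of the binned predictor: `Σ_i |E[(Y - f(X)) · 1_{f(X) ∈ I_i}]|`. -/
def TCEsum (D : Measure (X × ℝ)) (f : X → ℝ) {B : ℕ} (I : Fin B → Set ℝ) : ℝ :=
  ∑ i, |∫ z, binLoss f (I i) z ∂D|

/-- Expected calibration error of `f` over a finite sample `S` with bins `I`. -/
def ECE (f : X → ℝ) {B : ℕ} (I : Fin B → Set ℝ) {n : ℕ} (S : Fin n → X × ℝ) : ℝ :=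
  ∑ i, |(1 / (n : ℝ)) * ∑ m, binLoss f (I i) (S m)|

/-- Conditional mean `E[f(X) | f(X) ∈ I]` (zero if the conditioning event is null). -/
def condMean (D : Measure (X × ℝ)) (f : X → ℝ) (I : Set ℝ) : ℝ :=
  (∫ z, I.indicator (fun _ => f z.1) (f z.1) ∂D) / (D {z | f z.1 ∈ I}).toReal

/-- Binned predictor `f_I(x) = Σ_i E[f(X) | f(X) ∈ I_i] · 1_{f(x) ∈ I_i}`. -/
def binnedPred (D : Measure (X × ℝ)) (f : X → ℝ) {B : ℕ} (I : Fin B → Set ℝ) (x : X) : ℝ :=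
  ∑ i, condMean D f (I i) * (I i).indicator (fun _ => (1 : ℝ)) (f x)

/-- The conditional expectation `E[Y | g(X)]` as a function on `X × ℝ`. -/
def condY (D : Measure (X × ℝ)) (g : X → ℝ) : X × ℝ → ℝ :=
  D[(fun w : X × ℝ => w.2) | MeasurableSpace.comap (fun w : X × ℝ => g w.1) inferInstance]

/-- True calibration error `TCE(g) = E|E[Y | g(X)] - g(X)|`. -/
def TCE (D : Measure (X × ℝ)) (g : X → ℝ) : ℝ :=
  ∫ z, |condY D g z - g z.1| ∂D

/-- `I` is a finite measurable partition of `(0,1]`. -/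
def IsBinning {B : ℕ} (I : Fin B → Set ℝ) : Prop :=
  (∀ i, MeasurableSet (I i)) ∧ Pairwise (Function.onFun Disjoint I) ∧
    (⋃ i, I i) = Set.Ioc (0 : ℝ) 1

/-- Uniform-width binning: `I_i = (i/B, (i+1)/B]` for `i = 0, …, B-1`. -/
def uwb (B : ℕ) (i : Fin B) : Set ℝ :=
  Set.Ioc ((i : ℝ) / B) (((i : ℝ) + 1) / B)

/-- The `i`-th value (0-indexed) of the nondecreasing rearrangement of `v`. -/
def orderStat {n : ℕ} (v : Fin n → ℝ) (i : Fin n) : ℝ :=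
  (v ∘ Tuple.sort v) i

/-- Boundaries for uniform-mass binning: `u_0 = 0`, `u_b = f_(⌊nb/B⌋)` for `1 ≤ b ≤ B-1`,
`u_B = 1`. -/
def umbBoundary {n : ℕ} (v : Fin n → ℝ) (B b : ℕ) : ℝ :=
  if b = 0 then 0
  else if b < B then
    if h : n * b / B - 1 < n then orderStat v ⟨n * b / B - 1, h⟩ else 1
  else 1

/-- Uniform-mass binning built from the values `v = (f(x_1), …, f(x_n))`:
`I_b = (u_{b-1}, u_b]`. -/
def umb {n : ℕ} (v : Fin n → ℝ) (B : ℕ) (i : Fin B) : Set ℝ :=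
  Set.Ioc (umbBoundary v B i.val) (umbBoundary v B (i.val + 1))

/-- Lipschitz calibration assumption: there is an `L`-Lipschitz `g : [0,1] → [0,1]` with
`E[Y | f(X)] = g(f(X))` a.s. -/
def LipCalib (D : Measure (X × ℝ)) (f : X → ℝ) (L : ℝ) : Prop :=
  ∃ g : ℝ → ℝ, (∀ u ∈ Set.Icc (0 : ℝ) 1, g u ∈ Set.Icc (0 : ℝ) 1) ∧
    (∀ u ∈ Set.Icc (0 : ℝ) 1, ∀ v ∈ Set.Icc (0 : ℝ) 1, |g u - g v| ≤ L * |u - v|) ∧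
    condY D f =ᵐ[D] fun w => g (f w.1)

/-! ### Auxiliary lemmas for Hoeffding's lemma -/

lemma w_pos (p : ℝ) (hp0 : 0 ≤ p) (hp1 : p ≤ 1) (h : ℝ) : (0:ℝ) < 1 - p + p * Real.exp h := by
  rcases eq_or_lt_of_le hp1 with rfl | h1
  · simpa using Real.exp_pos h
  · nlinarith [Real.exp_pos h, mul_nonneg hp0 (Real.exp_pos h).le]

lemma hasDerivAt_w (p h : ℝ) : HasDerivAt (fun x => 1 - p + p * Real.exp x) (p * Real.exp h) h :=
  ((Real.hasDerivAt_exp h).const_mul p).const_add (1 - p)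

lemma hasDerivAt_psi' (p : ℝ) (hp0 : 0 ≤ p) (hp1 : p ≤ 1) (h : ℝ) :
    HasDerivAt (fun x => x/4 + p - p * Real.exp x / (1 - p + p * Real.exp x))
      (1/4 - p * Real.exp h * (1-p) / (1 - p + p * Real.exp h)^2) h := by
  have hw := w_pos p hp0 hp1 h
  have hq : HasDerivAt (fun x => p * Real.exp x / (1 - p + p * Real.exp x))
      ((p * Real.exp h * (1 - p + p * Real.exp h) - p * Real.exp h * (p * Real.exp h)) /
        (1 - p + p * Real.exp h)^2) h :=
    ((Real.hasDerivAt_exp h).const_mul p).div (hasDerivAt_w p h) hw.ne'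
  have := ((hasDerivAt_id h).div_const 4 |>.add_const p).sub hq
  refine this.congr_deriv ?_
  field_simp
  ring

lemma hasDerivAt_psi (p : ℝ) (hp0 : 0 ≤ p) (hp1 : p ≤ 1) (h : ℝ) :
    HasDerivAt (fun x => x^2/8 + p*x - Real.log (1 - p + p * Real.exp x))
      (h/4 + p - p * Real.exp h / (1 - p + p * Real.exp h)) h := by
  have hw := w_pos p hp0 hp1 h
  have hlog : HasDerivAt (fun x => Real.log (1 - p + p * Real.exp x))
      (p * Real.exp h / (1 - p + p * Real.exp h)) h := (hasDerivAt_w p h).log hw.ne'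
  have := (((hasDerivAt_pow 2 h).div_const 8).add ((hasDerivAt_id h).const_mul p)).sub hlog
  refine this.congr_deriv ?_
  ring

lemma psi'_nonneg (p : ℝ) (hp0 : 0 ≤ p) (hp1 : p ≤ 1) (h : ℝ) (hh : 0 ≤ h) :
    0 ≤ h/4 + p - p * Real.exp h / (1 - p + p * Real.exp h) := by
  have mono : Monotone (fun x => x/4 + p - p * Real.exp x / (1 - p + p * Real.exp x)) := by
    apply monotone_of_deriv_nonneg
    · intro x; exact (hasDerivAt_psi' p hp0 hp1 x).differentiableAt
    · intro x
      rw [(hasDerivAt_psi' p hp0 hp1 x).deriv]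
      have hw := w_pos p hp0 hp1 x
      have key : p * Real.exp x * (1-p) / (1 - p + p * Real.exp x)^2 ≤ 1/4 := by
        rw [div_le_iff₀ (by positivity)]
        nlinarith [sq_nonneg ((1-p) - p * Real.exp x)]
      linarith
  have h0 : (fun x => x/4 + p - p * Real.exp x / (1 - p + p * Real.exp x)) 0 = 0 := by
    simp
  calc (0:ℝ) = _ := h0.symm
    _ ≤ _ := mono hh

lemma phi_le_nonneg (p : ℝ) (hp0 : 0 ≤ p) (hp1 : p ≤ 1) (h : ℝ) (hh : 0 ≤ h) :
    -(p*h) + Real.log (1 - p + p * Real.exp h) ≤ h^2/8 := by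
  set ψ : ℝ → ℝ := fun x => x^2/8 + p*x - Real.log (1 - p + p * Real.exp x) with hψ
  have mono : MonotoneOn ψ (Set.Ici (0:ℝ)) := by
    apply monotoneOn_of_deriv_nonneg (convex_Ici 0)
    · exact Continuous.continuousOn (by
        fun_prop (disch := intro x; exact (w_pos p hp0 hp1 x).ne'))
    · intro x _; exact (hasDerivAt_psi p hp0 hp1 x).differentiableAt.differentiableWithinAt
    · intro x hx
      rw [(hasDerivAt_psi p hp0 hp1 x).deriv]
      exact psi'_nonneg p hp0 hp1 x (le_of_lt (by simpa using hx))
  have h0 : ψ 0 = 0 := by simp [hψ]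
  have := mono (Set.self_mem_Ici) (Set.mem_Ici.2 hh) hh
  rw [h0] at this
  simp only [hψ] at this
  linarith

lemma phi_le (p : ℝ) (hp0 : 0 ≤ p) (hp1 : p ≤ 1) (h : ℝ) :
    -(p*h) + Real.log (1 - p + p * Real.exp h) ≤ h^2/8 := by
  rcases le_or_gt 0 h with hh | hh
  · exact phi_le_nonneg p hp0 hp1 h hh
  · have key := phi_le_nonneg (1-p) (by linarith) (by linarith) (-h) (by linarith)
    have hw' := w_pos (1-p) (by linarith) (by linarith) (-h)
    have hid : 1 - p + p * Real.exp h = Real.exp h * (1 - (1-p) + (1-p) * Real.exp (-h)) := by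
      rw [Real.exp_neg]
      have := Real.exp_pos h
      field_simp
      ring
    rw [hid, Real.log_mul (Real.exp_pos h).ne' hw'.ne', Real.log_exp]
    nlinarith [key]

/-- **Hoeffding's lemma**: if `Y ∈ [a,b]` a.s. and `E Y = 0`, then
`E[exp (t Y)] ≤ exp (t² (b-a)² / 8)`. -/
lemma hoeffding_mgf {Ω : Type*} [MeasurableSpace Ω] (μ : Measure Ω) [IsProbabilityMeasure μ]
    {Y : Ω → ℝ} (hmeas : AEStronglyMeasurable Y μ) {a b : ℝ} (hab : a ≤ b)
    (hbdd : ∀ᵐ ω ∂μ, Y ω ∈ Set.Icc a b) (hmean : ∫ ω, Y ω ∂μ = 0) (t : ℝ) :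
    ∫ ω, Real.exp (t * Y ω) ∂μ ≤ Real.exp (t^2 * (b-a)^2 / 8) := by
  have hYint : Integrable Y μ := by
    refine Integrable.mono' (integrable_const (max |a| |b|)) hmeas ?_
    filter_upwards [hbdd] with ω hω
    rw [Real.norm_eq_abs, abs_le]
    have h1 : -|a| ≤ a := neg_abs_le a
    have h2 : b ≤ |b| := le_abs_self b
    have h3 : |a| ≤ max |a| |b| := le_max_left _ _
    have h4 : |b| ≤ max |a| |b| := le_max_right _ _
    exact ⟨by linarith [hω.1], by linarith [hω.2]⟩
  have ha : a ≤ 0 := by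
    have h : a = ∫ _, a ∂μ := by simp
    rw [h, ← hmean]
    exact integral_mono_ae (integrable_const a) hYint
      (by filter_upwards [hbdd] with ω hω using hω.1)
  have hb : 0 ≤ b := by
    have h : b = ∫ _, b ∂μ := by simp
    rw [h, ← hmean]
    exact integral_mono_ae hYint (integrable_const b)
      (by filter_upwards [hbdd] with ω hω using hω.2)
  rcases eq_or_lt_of_le hab with rfl | hlt
  · have ha0 : a = 0 := le_antisymm ha hb
    have hone : ∀ᵐ ω ∂μ, Real.exp (t * Y ω) = 1 := by
      filter_upwards [hbdd] with ω hω
      have : Y ω = 0 := le_antisymm (ha0 ▸ hω.2) (ha0 ▸ hω.1)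
      simp [this]
    rw [integral_congr_ae hone]
    simpa using Real.one_le_exp (by positivity)
  have hba : (0:ℝ) < b - a := by linarith
  set c1 : ℝ := (b * Real.exp (t*a) - a * Real.exp (t*b)) / (b - a) with hc1
  set c2 : ℝ := (Real.exp (t*b) - Real.exp (t*a)) / (b - a) with hc2
  have step1 : ∫ ω, Real.exp (t * Y ω) ∂μ ≤ ∫ ω, c1 + c2 * Y ω ∂μ := by
    apply integral_mono_ae
    · refine Integrable.mono' (integrable_const (max (Real.exp (t*a)) (Real.exp (t*b)))) ?_ ?_
      · exact (Real.continuous_exp.comp_aestronglyMeasurable (hmeas.const_mul t))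
      · filter_upwards [hbdd] with ω hω
        rw [Real.norm_eq_abs, abs_of_pos (Real.exp_pos _)]
        rcases le_or_gt 0 t with ht | ht
        · exact le_max_of_le_right (Real.exp_le_exp.2 (by nlinarith [hω.2]))
        · exact le_max_of_le_left (Real.exp_le_exp.2 (by nlinarith [hω.1]))
    · exact (integrable_const c1).add (hYint.const_mul c2)
    · filter_upwards [hbdd] with ω hω
      have w1 : (0:ℝ) ≤ (b - Y ω)/(b-a) := by
        apply div_nonneg _ hba.le; linarith [hω.2]
      have w2 : (0:ℝ) ≤ (Y ω - a)/(b-a) := by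
        apply div_nonneg _ hba.le; linarith [hω.1]
      have wsum : (b - Y ω)/(b-a) + (Y ω - a)/(b-a) = 1 := by field_simp; ring
      have hconv := convexOn_exp.2 (Set.mem_univ (t*a)) (Set.mem_univ (t*b)) w1 w2 wsum
      simp only [smul_eq_mul] at hconv
      have harg : (b - Y ω)/(b-a) * (t*a) + (Y ω - a)/(b-a) * (t*b) = t * Y ω := by
        field_simp; ring
      rw [harg] at hconv
      refine hconv.trans (le_of_eq ?_)
      rw [hc1, hc2]; field_simp; ring
  have step2 : ∫ ω, c1 + c2 * Y ω ∂μ = c1 := by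
    rw [integral_add (integrable_const c1) (hYint.const_mul c2),
      MeasureTheory.integral_const_mul, hmean]
    simp
  set p : ℝ := -a/(b-a) with hp
  set h : ℝ := t*(b-a) with hh
  have hp0 : 0 ≤ p := div_nonneg (by linarith) hba.le
  have hp1 : p ≤ 1 := by rw [div_le_one hba]; linarith
  have hwpos := w_pos p hp0 hp1 h
  have hc1eq : c1 = Real.exp (-(p*h) + Real.log (1 - p + p * Real.exp h)) := by
    rw [Real.exp_add, Real.exp_log hwpos, hc1, hp, hh]
    have hph : -(-a/(b-a)*(t*(b-a))) = t*a := by field_simp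
    rw [hph]
    have hexp : Real.exp (t*b) = Real.exp (t*a) * Real.exp (t*(b-a)) := by
      rw [← Real.exp_add]; ring_nf
    rw [hexp]
    field_simp
    ring
  have hfinal : c1 ≤ Real.exp (t^2 * (b-a)^2 / 8) := by
    rw [hc1eq]
    apply Real.exp_le_exp.2
    have hphile := phi_le p hp0 hp1 h
    have hsq : h^2 = t^2*(b-a)^2 := by rw [hh]; ring
    linarith [hsq ▸ hphile]
  linarith [step1, step2 ▸ step1, hfinal]

/-! ### Auxiliary lemmas on bin losses -/

lemma sum_indicator_le_one' {B : ℕ} (I : Fin B → Set ℝ)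
    (hdis : Pairwise (Function.onFun Disjoint I)) (u : ℝ) :
    ∑ i, (I i).indicator (fun _ => (1:ℝ)) u ≤ 1 := by
  classical
  by_cases hex : ∃ i, u ∈ I i
  · obtain ⟨i0, hi0⟩ := hex
    rw [Finset.sum_eq_single i0]
    · simp [Set.indicator_of_mem hi0]
    · intro j _ hj
      have hju : u ∉ I j := fun hu => Set.disjoint_left.1 (hdis hj) hu hi0
      simp [Set.indicator_of_notMem hju]
    · intro hc; exact absurd (Finset.mem_univ i0) hc
  · push_neg at hex
    rw [Finset.sum_eq_zero (fun j _ => by simp [Set.indicator_of_notMem (hex j)])]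
    norm_num

lemma abs_binLoss_le (f : X → ℝ) (I' : Set ℝ) (z : X × ℝ) :
    |binLoss f I' z| = |z.2 - f z.1| * I'.indicator (fun _ => (1:ℝ)) (f z.1) := by
  rw [binLoss, abs_mul, abs_of_nonneg (Set.indicator_nonneg (fun _ _ => zero_le_one) _)]

lemma abs_signed_sum_le {B : ℕ} (f : X → ℝ) (I : Fin B → Set ℝ)
    (hdis : Pairwise (Function.onFun Disjoint I)) (e : Fin B → ℝ)
    (he : ∀ i, |e i| ≤ 1) (z : X × ℝ) (hz : |z.2 - f z.1| ≤ 1) :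
    |∑ i, e i * binLoss f (I i) z| ≤ 1 := by
  have hnn : ∀ i : Fin B, (0:ℝ) ≤ (I i).indicator (fun _ => (1:ℝ)) (f z.1) :=
    fun i => Set.indicator_nonneg (fun _ _ => zero_le_one) _
  calc |∑ i, e i * binLoss f (I i) z| ≤ ∑ i, |e i * binLoss f (I i) z| :=
        Finset.abs_sum_le_sum_abs _ _
    _ ≤ ∑ i, |z.2 - f z.1| * (I i).indicator (fun _ => (1:ℝ)) (f z.1) := by
        refine Finset.sum_le_sum fun i _ => ?_
        rw [abs_mul, abs_binLoss_le]
        calc |e i| * (|z.2 - f z.1| * (I i).indicator (fun _ => (1:ℝ)) (f z.1))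
            ≤ 1 * (|z.2 - f z.1| * (I i).indicator (fun _ => (1:ℝ)) (f z.1)) :=
              mul_le_mul_of_nonneg_right (he i) (mul_nonneg (abs_nonneg _) (hnn i))
          _ = _ := one_mul _
    _ = |z.2 - f z.1| * ∑ i, (I i).indicator (fun _ => (1:ℝ)) (f z.1) := by
        rw [Finset.mul_sum]
    _ ≤ 1 * 1 := mul_le_mul hz (sum_indicator_le_one' I hdis _)
        (Finset.sum_nonneg fun i _ => hnn i) zero_le_one
    _ = 1 := mul_one 1

lemma measurable_binLoss (f : X → ℝ) (hf : Measurable f) (I' : Set ℝ)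
    (hI' : MeasurableSet I') : Measurable (binLoss f I') := by
  apply Measurable.mul
  · exact measurable_snd.sub (hf.comp measurable_fst)
  · exact (measurable_const.indicator hI').comp (hf.comp measurable_fst)

/-- Core concentration estimate for an abstract family of a.e.-bounded losses. -/
lemma core_concentration {E : Type*} [MeasurableSpace E] (D : Measure E)
    [IsProbabilityMeasure D] {B n : ℕ} (hn : 0 < n)
    (l : Fin B → E → ℝ) (hlmeas : ∀ i, Measurable (l i))
    (hbdd : ∀ᵐ z ∂D, ∀ e : Fin B → ℝ, (∀ i, |e i| ≤ 1) → |∑ i, e i * l i z| ≤ 1)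
    {lam : ℝ} (hlam : 0 ≤ lam) :
    Integrable (fun S : Fin n → E => ∑ i, |(∫ z, l i z ∂D) - (1/(n:ℝ)) * ∑ m, l i (S m)|)
      (Measure.pi fun _ : Fin n => D) ∧
    Integrable (fun S : Fin n → E =>
        Real.exp (lam * ∑ i, |(∫ z, l i z ∂D) - (1/(n:ℝ)) * ∑ m, l i (S m)|))
      (Measure.pi fun _ : Fin n => D) ∧
    (∫ S, Real.exp (lam * ∑ i, |(∫ z, l i z ∂D) - (1/(n:ℝ)) * ∑ m, l i (S m)|)
        ∂(Measure.pi fun _ : Fin n => D) ≤ 2 ^ B * Real.exp (lam ^ 2 / (2 * n))) ∧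
    lam * ∫ S, ∑ i, |(∫ z, l i z ∂D) - (1/(n:ℝ)) * ∑ m, l i (S m)| ∂(Measure.pi fun _ : Fin n => D)
      ≤ B * Real.log 2 + lam ^ 2 / (2 * n) := by
  classical
  have hn' : (n:ℝ) ≠ 0 := Nat.cast_ne_zero.2 hn.ne'
  have hnpos : (0:ℝ) < n := by exact_mod_cast hn
  letI : MeasureSpace E := ⟨D⟩
  haveI : IsProbabilityMeasure (volume : Measure E) := ‹IsProbabilityMeasure D›
  set P : Measure (Fin n → E) := Measure.pi fun _ : Fin n => D with hP
  haveI hPprob : IsProbabilityMeasure P := by rw [hP]; infer_instance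
  -- basic facts
  have hl1 : ∀ᵐ z ∂D, ∀ i, |l i z| ≤ 1 := by
    filter_upwards [hbdd] with z hz
    intro i
    have := hz (fun j => if j = i then 1 else 0) (by intro j; split <;> norm_num)
    simpa [Finset.sum_ite_eq', ite_mul] using this
  have hlint : ∀ i, Integrable (l i) D := by
    intro i
    refine Integrable.mono' (integrable_const 1) (hlmeas i).aestronglyMeasurable ?_
    filter_upwards [hl1] with z hz using by simpa using hz i
  set μ : Fin B → ℝ := fun i => ∫ z, l i z ∂D with hμ
  have hμbd : ∀ i, |μ i| ≤ 1 := by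
    intro i
    calc |μ i| ≤ ∫ z, |l i z| ∂D := by
          simpa [Real.norm_eq_abs] using norm_integral_le_integral_norm (μ := D) (l i)
      _ ≤ ∫ _, (1:ℝ) ∂D := integral_mono_ae (hlint i).abs (integrable_const 1)
          (by filter_upwards [hl1] with z hz using hz i)
      _ = 1 := by simp
  -- sign vectors
  set sgn : Finset (Fin B) → Fin B → ℝ := fun T i => if i ∈ T then 1 else -1 with hsgn
  have hsgnabs : ∀ T i, |sgn T i| ≤ 1 := by
    intro T i; rw [hsgn]; dsimp only; split <;> norm_num
  set g : Finset (Fin B) → E → ℝ := fun T z => ∑ i, sgn T i * l i z with hg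
  have hgmeas : ∀ T, Measurable (g T) :=
    fun T => Finset.measurable_sum _ fun i _ => (hlmeas i).const_mul _
  have hgbd : ∀ᵐ z ∂D, ∀ T, |g T z| ≤ 1 := by
    filter_upwards [hbdd] with z hz
    intro T; exact hz (sgn T) (hsgnabs T)
  set c : Finset (Fin B) → ℝ := fun T => ∑ i, sgn T i * μ i with hc
  have hgmean : ∀ T, ∫ z, g T z ∂D = c T := by
    intro T
    rw [hg]; dsimp only
    rw [integral_finset_sum _ (fun i _ => (hlint i).const_mul _)]
    simp only [MeasureTheory.integral_const_mul]
    rfl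
  set h : Finset (Fin B) → E → ℝ := fun T z => Real.exp ((lam/n) * (c T - g T z)) with hh
  have hhmeas : ∀ T, Measurable (h T) :=
    fun T => Real.measurable_exp.comp ((measurable_const.sub (hgmeas T)).const_mul _)
  have hhint : ∀ T, Integrable (h T) D := by
    intro T
    refine Integrable.mono' (integrable_const (Real.exp (|lam/n| * (|c T| + 1))))
      (hhmeas T).aestronglyMeasurable ?_
    filter_upwards [hgbd] with z hz
    rw [Real.norm_eq_abs, abs_of_pos (Real.exp_pos _)]
    apply Real.exp_le_exp.2
    calc (lam/n) * (c T - g T z) ≤ |(lam/n) * (c T - g T z)| := le_abs_self _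
      _ = |lam/(n:ℝ)| * |c T - g T z| := abs_mul _ _
      _ ≤ |lam/(n:ℝ)| * (|c T| + 1) := by
          refine mul_le_mul_of_nonneg_left ?_ (abs_nonneg _)
          have h1 := le_abs_self (c T); have h2 := neg_abs_le (c T)
          have h3 := abs_le.1 (hz T)
          exact abs_le.2 ⟨by linarith [h3.1, h3.2], by linarith [h3.1, h3.2]⟩
  have hhval : ∀ T, ∫ z, h T z ∂D ≤ Real.exp (lam^2 / (2*(n:ℝ)^2)) := by
    intro T
    have hmean0 : ∫ z, (c T - g T z) ∂D = 0 := by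
      rw [integral_sub (integrable_const _) ?_]
      · rw [integral_const, hgmean T]; simp
      · rw [hg]; exact integrable_finset_sum _ fun i _ => (hlint i).const_mul _
    have hbdd0 : ∀ᵐ z ∂D, c T - g T z ∈ Set.Icc (c T - 1) (c T + 1) := by
      filter_upwards [hgbd] with z hz
      have h3 := abs_le.1 (hz T)
      exact ⟨by linarith [h3.2], by linarith [h3.1]⟩
    have key := hoeffding_mgf D (Y := fun z => c T - g T z)
      ((measurable_const.sub (hgmeas T)).aestronglyMeasurable)
      (a := c T - 1) (b := c T + 1) (by linarith) hbdd0 hmean0 (lam/n)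
    refine le_trans (le_of_eq ?_) (key.trans (le_of_eq ?_))
    · rfl
    · congr 1
      field_simp
      ring
  have hhnn : ∀ T, 0 ≤ ∫ z, h T z ∂D := fun T => integral_nonneg fun z => Real.exp_nonneg _
  -- per-sign-vector sample function is a product over coordinates
  have hFprod : ∀ (T : Finset (Fin B)) (S : Fin n → E),
      Real.exp (lam * ∑ i, sgn T i * (μ i - (1/(n:ℝ)) * ∑ m, l i (S m))) = ∏ m, h T (S m) := by
    intro T S
    rw [hh]; dsimp only
    rw [← Real.exp_sum]
    congr 1
    have swap : ∑ i, sgn T i * ∑ m, l i (S m) = ∑ m, g T (S m) := by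
      simp_rw [Finset.mul_sum]
      rw [Finset.sum_comm]
    have e1 : ∑ m : Fin n, (lam/(n:ℝ)) * (c T - g T (S m))
        = (n:ℝ)*((lam/(n:ℝ))* c T) - (lam/(n:ℝ)) * ∑ m, g T (S m) := by
      simp only [mul_sub]
      rw [Finset.sum_sub_distrib, Finset.sum_const, Finset.card_univ, Fintype.card_fin,
        nsmul_eq_mul, ← Finset.mul_sum]
    have e2 : ∑ i, sgn T i * (μ i - (1/(n:ℝ)) * ∑ m, l i (S m))
        = c T - (1/(n:ℝ)) * ∑ m, g T (S m) := by
      simp only [mul_sub]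
      rw [Finset.sum_sub_distrib]
      congr 1
      rw [← swap, Finset.mul_sum]
      exact Finset.sum_congr rfl fun i _ => by ring
    rw [e1, e2]
    field_simp
  have hFint : ∀ T, Integrable (fun S : Fin n → E => ∏ m, h T (S m)) P :=
    fun T => Integrable.fintype_prod (f := fun _ : Fin n => h T) (fun m => hhint T)
  have hFval : ∀ T, ∫ S, ∏ m, h T (S m) ∂P = (∫ z, h T z ∂D)^n := by
    intro T
    have := MeasureTheory.integral_fintype_prod_eq_pow (ι := Fin n) (h T) (μ := D)
    simp only [Fintype.card_fin] at this
    exact this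
  -- pointwise key inequality
  have key : ∀ S : Fin n → E,
      Real.exp (lam * ∑ i, |μ i - (1/(n:ℝ)) * ∑ m, l i (S m)|)
        ≤ ∑ T ∈ Finset.univ.powerset, ∏ m, h T (S m) := by
    intro S
    set v : Fin B → ℝ := fun i => μ i - (1/(n:ℝ)) * ∑ m, l i (S m) with hv
    calc Real.exp (lam * ∑ i, |v i|) = ∏ i, Real.exp (lam * |v i|) := by
          rw [← Real.exp_sum, Finset.mul_sum]
      _ ≤ ∏ i, (Real.exp (lam * v i) + Real.exp (lam * -(v i))) := by
          refine Finset.prod_le_prod (fun i _ => Real.exp_nonneg _) (fun i _ => ?_)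
          rcases le_or_gt 0 (v i) with hvi | hvi
          · rw [abs_of_nonneg hvi]
            linarith [Real.exp_pos (lam * -(v i))]
          · rw [abs_of_neg hvi]
            linarith [Real.exp_pos (lam * v i)]
      _ = ∑ T ∈ Finset.univ.powerset,
            (∏ i ∈ T, Real.exp (lam * v i)) * ∏ i ∈ Finset.univ \ T, Real.exp (lam * -(v i)) :=
          Finset.prod_add _ _ _
      _ = ∑ T ∈ Finset.univ.powerset, ∏ m, h T (S m) := by
          refine Finset.sum_congr rfl fun T _ => ?_
          rw [← hFprod T S, ← Real.exp_sum, ← Real.exp_sum, ← Real.exp_add]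
          congr 1
          have split : lam * ∑ i, sgn T i * v i
              = (∑ i ∈ T, lam * v i) + ∑ i ∈ Finset.univ \ T, lam * -(v i) := by
            rw [Finset.mul_sum,
              ← Finset.sum_filter_add_sum_filter_not Finset.univ (· ∈ T)
                (fun i => lam * (sgn T i * v i))]
            congr 1
            · rw [Finset.filter_mem_eq_inter, Finset.univ_inter]
              refine Finset.sum_congr rfl fun i hi => ?_
              rw [hsgn]; simp only [hi, if_true]; ring
            · rw [Finset.sdiff_eq_filter]
              refine Finset.sum_congr rfl fun i hi => ?_
              rw [Finset.mem_filter] at hi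
              rw [hsgn]; simp only [hi.2, if_false]; ring
          rw [← split]
  -- main integral bound
  have intSum : Integrable (fun S : Fin n → E => ∑ T ∈ Finset.univ.powerset, ∏ m, h T (S m)) P :=
    integrable_finset_sum _ fun T _ => hFint T
  have partC : ∫ S, Real.exp (lam * ∑ i, |μ i - (1/(n:ℝ)) * ∑ m, l i (S m)|) ∂P
      ≤ 2 ^ B * Real.exp (lam ^ 2 / (2 * n)) := by
    calc ∫ S, Real.exp (lam * ∑ i, |μ i - (1/(n:ℝ)) * ∑ m, l i (S m)|) ∂P
        ≤ ∫ S, ∑ T ∈ Finset.univ.powerset, ∏ m, h T (S m) ∂P :=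
          integral_mono_of_nonneg (Filter.Eventually.of_forall fun S => Real.exp_nonneg _)
            intSum (Filter.Eventually.of_forall key)
      _ = ∑ T ∈ Finset.univ.powerset, ∫ S, ∏ m, h T (S m) ∂P :=
          integral_finset_sum _ fun T _ => hFint T
      _ = ∑ T ∈ Finset.univ.powerset, (∫ z, h T z ∂D)^n :=
          Finset.sum_congr rfl fun T _ => hFval T
      _ ≤ ∑ T ∈ Finset.univ.powerset, (Real.exp (lam^2/(2*(n:ℝ)^2)))^n :=
          Finset.sum_le_sum fun T _ => pow_le_pow_left₀ (hhnn T) (hhval T) n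
      _ = 2 ^ B * Real.exp (lam ^ 2 / (2 * n)) := by
          rw [Finset.sum_const, Finset.card_powerset, Finset.card_univ, Fintype.card_fin,
            nsmul_eq_mul, ← Real.exp_nat_mul]
          congr 1
          · push_cast; ring
          · field_simp
  -- integrability of V and exp(lam * V)
  have hVmeas : Measurable (fun S : Fin n → E => ∑ i, |μ i - (1/(n:ℝ)) * ∑ m, l i (S m)|) := by
    refine Finset.measurable_sum _ fun i _ => Measurable.abs ?_
    exact measurable_const.sub
      ((Finset.measurable_sum Finset.univ fun m _ =>
        (hlmeas i).comp (measurable_pi_apply m)).const_mul (1/(n:ℝ)))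
  have hVbd : ∀ᵐ S ∂P, ∀ m : Fin n, ∀ i, |l i (S m)| ≤ 1 := by
    rw [hP]
    refine ae_all_iff.2 fun m => ?_
    exact (MeasureTheory.Measure.tendsto_eval_ae_ae (μ := fun _ : Fin n => D) (i := m)).eventually hl1
  have hVle : ∀ᵐ S ∂P, ∀ i, |μ i - (1/(n:ℝ)) * ∑ m, l i (S m)| ≤ 2 := by
    filter_upwards [hVbd] with S hS i
    have hsum : |∑ m, l i (S m)| ≤ (n:ℝ) := by
      calc |∑ m, l i (S m)| ≤ ∑ m, |l i (S m)| := Finset.abs_sum_le_sum_abs _ _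
        _ ≤ ∑ _m : Fin n, (1:ℝ) := Finset.sum_le_sum fun m _ => hS m i
        _ = (n:ℝ) := by simp
    have h2 : |(1/(n:ℝ)) * ∑ m, l i (S m)| ≤ 1 := by
      rw [abs_mul, abs_of_pos (by positivity : (0:ℝ) < 1/(n:ℝ))]
      calc (1/(n:ℝ)) * |∑ m, l i (S m)| ≤ (1/(n:ℝ)) * (n:ℝ) :=
            mul_le_mul_of_nonneg_left hsum (by positivity)
        _ = 1 := by field_simp
    have ha := abs_le.1 (hμbd i); have hb := abs_le.1 h2
    exact abs_le.2 ⟨by linarith, by linarith⟩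
  have hVint : Integrable (fun S : Fin n → E => ∑ i, |μ i - (1/(n:ℝ)) * ∑ m, l i (S m)|) P := by
    refine Integrable.mono' (integrable_const (2*(B:ℝ))) hVmeas.aestronglyMeasurable ?_
    filter_upwards [hVle] with S hS
    rw [Real.norm_eq_abs, abs_of_nonneg (Finset.sum_nonneg fun i _ => abs_nonneg _)]
    calc ∑ i, |μ i - (1/(n:ℝ)) * ∑ m, l i (S m)| ≤ ∑ _i : Fin B, (2:ℝ) :=
          Finset.sum_le_sum fun i _ => hS i
      _ = 2*(B:ℝ) := by simp [mul_comm]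
  have hexpVint : Integrable
      (fun S : Fin n → E => Real.exp (lam * ∑ i, |μ i - (1/(n:ℝ)) * ∑ m, l i (S m)|)) P := by
    refine Integrable.mono' intSum
      (Real.measurable_exp.comp (hVmeas.const_mul lam)).aestronglyMeasurable
      (Filter.Eventually.of_forall fun S => ?_)
    rw [Real.norm_eq_abs, abs_of_pos (Real.exp_pos _)]
    exact key S
  -- log-moment bound
  have partD : lam * ∫ S, (∑ i, |μ i - (1/(n:ℝ)) * ∑ m, l i (S m)|) ∂P
      ≤ B * Real.log 2 + lam^2/(2*n) := by
    have jensen := (convexOn_exp).map_integral_le (μ := P)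
      (f := fun S => lam * ∑ i, |μ i - (1/(n:ℝ)) * ∑ m, l i (S m)|)
      Real.continuous_exp.continuousOn isClosed_univ
      (Filter.Eventually.of_forall fun S => Set.mem_univ _) (hVint.const_mul lam)
      (by exact hexpVint)
    rw [MeasureTheory.integral_const_mul] at jensen
    have pos2B : (0:ℝ) < 2^B * Real.exp (lam^2/(2*n)) := by positivity
    calc lam * ∫ S, (∑ i, |μ i - (1/(n:ℝ)) * ∑ m, l i (S m)|) ∂P
        = Real.log (Real.exp (lam * ∫ S, (∑ i, |μ i - (1/(n:ℝ)) * ∑ m, l i (S m)|) ∂P)) :=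
          (Real.log_exp _).symm
      _ ≤ Real.log (2^B * Real.exp (lam^2/(2*n))) :=
          Real.log_le_log (Real.exp_pos _) (le_trans jensen partC)
      _ = B * Real.log 2 + lam^2/(2*n) := by
          rw [Real.log_mul (by positivity) (Real.exp_ne_zero _), Real.log_pow, Real.log_exp]
  exact ⟨hVint, hexpVint, partC, partD⟩

/-- Exponential-moment concentration for the statistical bias: for every
`λ ≥ 0`, `E_S[exp(λ Σ_i |E[l_i(Z)] − (1/n) Σ_m l_i(Z_m)|)] ≤ 2^B · exp(λ²/(2n))`;
consequently `λ · E_S|TCE(f_I) − ECE(f, S)| ≤ B log 2 + λ²/(2n)`. -/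
theorem exp_moment_statistical_bias
    (D : Measure (X × ℝ)) [IsProbabilityMeasure D]
    (hY : ∀ᵐ z ∂D, z.2 = 0 ∨ z.2 = 1)
    (f : X → ℝ) (hf : Measurable f) (hrange : ∀ x, f x ∈ Set.Icc (0 : ℝ) 1)
    {B : ℕ} (I : Fin B → Set ℝ) (hI : IsBinning I)
    (n : ℕ) (hn : 0 < n) (lam : ℝ) (hlam : 0 ≤ lam) :
    (∫ S, Real.exp (lam * ∑ i, |(∫ z, binLoss f (I i) z ∂D) -
          (1 / (n : ℝ)) * ∑ m, binLoss f (I i) (S m)|)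
        ∂(Measure.pi fun _ : Fin n => D)
      ≤ 2 ^ B * Real.exp (lam ^ 2 / (2 * n))) ∧
    lam * ∫ S, |TCEsum D f I - ECE f I S| ∂(Measure.pi fun _ : Fin n => D)
      ≤ B * Real.log 2 + lam ^ 2 / (2 * n) := by
  classical
  obtain ⟨hImeas, hIdis, -⟩ := hI
  have habs : ∀ᵐ z ∂D, |z.2 - f z.1| ≤ 1 := by
    filter_upwards [hY] with z hz
    have hfz := hrange z.1
    rcases hz with h0 | h1
    · rw [h0, abs_le]; exact ⟨by linarith [hfz.2], by linarith [hfz.1]⟩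
    · rw [h1, abs_le]; exact ⟨by linarith [hfz.2], by linarith [hfz.1]⟩
  have hbdd : ∀ᵐ z ∂D, ∀ e : Fin B → ℝ, (∀ i, |e i| ≤ 1) →
      |∑ i, e i * binLoss f (I i) z| ≤ 1 := by
    filter_upwards [habs] with z hz e he
    exact abs_signed_sum_le f I hIdis e he z hz
  obtain ⟨hVint, hexpVint, partC, partD⟩ :=
    core_concentration D hn (fun i => binLoss f (I i))
      (fun i => measurable_binLoss f hf (I i) (hImeas i)) hbdd hlam
  refine ⟨partC, ?_⟩
  have hWle : ∀ S : Fin n → X × ℝ, |TCEsum D f I - ECE f I S|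
      ≤ ∑ i, |(∫ z, binLoss f (I i) z ∂D) - (1/(n:ℝ)) * ∑ m, binLoss f (I i) (S m)| := by
    intro S
    simp only [TCEsum, ECE]
    rw [← Finset.sum_sub_distrib]
    refine (Finset.abs_sum_le_sum_abs _ _).trans (Finset.sum_le_sum fun i _ => ?_)
    exact abs_abs_sub_abs_le_abs_sub _ _
  have hWint : Integrable (fun S => |TCEsum D f I - ECE f I S|)
      (Measure.pi fun _ : Fin n => D) := by
    have hECEmeas : Measurable (fun S : Fin n → X × ℝ => ECE f I S) := by
      unfold ECE
      exact Finset.measurable_sum _ fun i _ =>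
        ((Finset.measurable_sum Finset.univ fun m _ =>
          (measurable_binLoss f hf (I i) (hImeas i)).comp
            (measurable_pi_apply m)).const_mul (1/(n:ℝ))).abs
    refine Integrable.mono' hVint
      ((measurable_const.sub hECEmeas).abs).aestronglyMeasurable
      (Filter.Eventually.of_forall fun S => ?_)
    rw [Real.norm_eq_abs, abs_abs]
    exact hWle S
  have hmono : ∫ S, |TCEsum D f I - ECE f I S| ∂(Measure.pi fun _ : Fin n => D)
      ≤ ∫ S, ∑ i, |(∫ z, binLoss f (I i) z ∂D) - (1/(n:ℝ)) * ∑ m, binLoss f (I i) (S m)|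
          ∂(Measure.pi fun _ : Fin n => D) :=
    integral_mono hWint hVint hWle
  calc lam * ∫ S, |TCEsum D f I - ECE f I S| ∂(Measure.pi fun _ : Fin n => D)
      ≤ lam * ∫ S, ∑ i, |(∫ z, binLoss f (I i) z ∂D)
          - (1/(n:ℝ)) * ∑ m, binLoss f (I i) (S m)| ∂(Measure.pi fun _ : Fin n => D) :=
        mul_le_mul_of_nonneg_left hmono hlam
    _ ≤ B * Real.log 2 + lam ^ 2 / (2 * n) := partD


end Calib
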